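/- Discrete 2-approximation for the restricted 1-mean: let (X,ρ) be a metric space, let T be a set of n point sequences over X, each of complexity at most m, let ℓ ≥ 2, and let P be the set of all vertices of all sequences in T. Then there exists a point sequence c' of complexity at most ℓ with all vertices in P such that cost_1^1(T, c') ≤ 2 · min_{c ∈ X^{≤ℓ}} cost_1^1(T, c). -/
import Mathlib


open scoped BigOperators

/-- An `(m₁, m₂)`-warping (with 0-based indices): a sequence of index pairs starting at
`(0,0)`, ending at `(m₁-1, m₂-1)`, whose consecutive increments lie in
`{(0,1), (1,0), (1,1)}`. -/
def IsWarping (m₁ m₂ : ℕ) (W : List (ℕ × ℕ)) : Prop :=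
  W ≠ [] ∧ W.head? = some (0, 0) ∧ W.getLast? = some (m₁ - 1, m₂ - 1) ∧
    ∀ k, k + 1 < W.length →
      W.getD (k + 1) (0, 0) = ((W.getD k (0, 0)).1, (W.getD k (0, 0)).2 + 1) ∨
      W.getD (k + 1) (0, 0) = ((W.getD k (0, 0)).1 + 1, (W.getD k (0, 0)).2) ∨
      W.getD (k + 1) (0, 0) = ((W.getD k (0, 0)).1 + 1, (W.getD k (0, 0)).2 + 1)

/-- The cost `Σ_{(i,j) ∈ W} ρ(σ_i, τ_j)^p` of a warping `W`. -/
noncomputable def warpCost {X : Type*} [MetricSpace X] [Inhabited X]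
    (p : ℝ) (σ τ : List X) (W : List (ℕ × ℕ)) : ℝ :=
  (W.map fun ij => dist (σ.getD ij.1 default) (τ.getD ij.2 default) ^ p).sum

/-- The `p`-dynamic time warping distance between two point sequences. -/
noncomputable def dtw {X : Type*} [MetricSpace X] [Inhabited X] (p : ℝ) (σ τ : List X) : ℝ :=
  sInf { c : ℝ | ∃ W, IsWarping σ.length τ.length W ∧ c = warpCost p σ τ W ^ (1 / p) }

/-- `cost_p^q(T, c) = Σ_{τ ∈ T} dtw_p(c, τ)^q`. -/
noncomputable def dtwCost {X : Type*} [MetricSpace X] [Inhabited X]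
    (p q : ℝ) (T : Finset (List X)) (c : List X) : ℝ :=
  ∑ τ ∈ T, dtw p c τ ^ q

/-- `σ` is a point sequence of complexity at most `ℓ`, i.e. `σ ∈ X^{≤ℓ}`. -/
def SeqLE {X : Type*} (ℓ : ℕ) (σ : List X) : Prop := 2 ≤ σ.length ∧ σ.length ≤ ℓ

/-- the standard warping -/
def stdWarp (m₁ m₂ : ℕ) : List (ℕ × ℕ) :=
  (List.range (m₁ + m₂ - 1)).map fun k => if k < m₁ then (k, 0) else (m₁ - 1, k - (m₁ - 1))

lemma stdWarp_getD {m₁ m₂ k : ℕ} (hk : k < m₁ + m₂ - 1) :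
    (stdWarp m₁ m₂).getD k (0, 0) = if k < m₁ then (k, 0) else (m₁ - 1, k - (m₁ - 1)) := by
  rw [stdWarp, List.getD_eq_getElem _ _ (by simpa using hk)]
  simp

lemma stdWarp_isWarping {m₁ m₂ : ℕ} (h₁ : 1 ≤ m₁) (h₂ : 1 ≤ m₂) :
    IsWarping m₁ m₂ (stdWarp m₁ m₂) := by
  have hlen : (stdWarp m₁ m₂).length = m₁ + m₂ - 1 := by simp [stdWarp]
  have hne : stdWarp m₁ m₂ ≠ [] := by
    intro h; rw [h] at hlen; simp at hlen; omega
  refine ⟨hne, ?_, ?_, ?_⟩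
  · rw [List.head?_eq_getElem?, List.getElem?_eq_getElem (by omega : 0 < (stdWarp m₁ m₂).length),
      ← List.getD_eq_getElem _ (0,0), stdWarp_getD (by omega),
      if_pos (by omega : (0:ℕ) < m₁)]
  · rw [List.getLast?_eq_getElem?, hlen,
      List.getElem?_eq_getElem (by rw [hlen]; omega : m₁ + m₂ - 1 - 1 < (stdWarp m₁ m₂).length),
      ← List.getD_eq_getElem _ (0,0), stdWarp_getD (by omega)]
    rcases lt_or_ge (m₁ + m₂ - 1 - 1) m₁ with h | h
    · rw [if_pos h]
      simp only [Option.some.injEq, Prod.mk.injEq, true_and, and_true]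
      omega
    · rw [if_neg (by omega)]
      simp only [Option.some.injEq, Prod.mk.injEq, true_and, and_true]
      omega
  · intro k hk
    rw [hlen] at hk
    rw [stdWarp_getD (by omega), stdWarp_getD (by omega)]
    rcases lt_trichotomy (k+1) m₁ with h | h | h
    · right; left
      rw [if_pos h, if_pos (by omega)]
    · left
      rw [if_neg (by omega), if_pos (by omega)]
      simp only [Prod.mk.injEq, true_and, and_true]; omega
    · left
      rw [if_neg (by omega), if_neg (by omega)]
      simp only [Prod.mk.injEq]
      exact ⟨trivial, by omega⟩

lemma warp_getD_last {m₁ m₂ : ℕ} {W : List (ℕ × ℕ)} (h : IsWarping m₁ m₂ W) :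
    W.getD (W.length - 1) (0, 0) = (m₁ - 1, m₂ - 1) := by
  have := h.2.2.1
  rw [List.getLast?_eq_getElem?] at this
  have hl : W.length - 1 < W.length := by
    have := List.length_pos_iff.2 h.1; omega
  rw [List.getElem?_eq_getElem hl] at this
  rw [List.getD_eq_getElem _ _ hl]
  exact Option.some_injective _ this

lemma warp_mono {m₁ m₂ : ℕ} {W : List (ℕ × ℕ)} (h : IsWarping m₁ m₂ W) :
    ∀ d k, k + d ≤ W.length - 1 →
      (W.getD k (0,0)).1 ≤ (W.getD (k + d) (0,0)).1 ∧
      (W.getD k (0,0)).2 ≤ (W.getD (k + d) (0,0)).2 := by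
  intro d
  induction d with
  | zero => simp
  | succ d ih =>
    intro k hk
    have hlen : 0 < W.length := List.length_pos_iff.2 h.1
    have h1 : k + 1 < W.length := by omega
    have ih' := ih (k + 1) (by omega)
    have step := h.2.2.2 k h1
    have : (W.getD k (0,0)).1 ≤ (W.getD (k+1) (0,0)).1 ∧
        (W.getD k (0,0)).2 ≤ (W.getD (k+1) (0,0)).2 := by
      rcases step with hs | hs | hs <;> rw [hs] <;> simp
    have heq : k + (d + 1) = (k + 1) + d := by omega
    rw [heq]
    exact ⟨this.1.trans ih'.1, this.2.trans ih'.2⟩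

lemma warp_mem_bound {m₁ m₂ : ℕ} {W : List (ℕ × ℕ)} (h : IsWarping m₁ m₂ W) :
    ∀ ij ∈ W, ij.1 ≤ m₁ - 1 ∧ ij.2 ≤ m₂ - 1 := by
  intro ij hij
  obtain ⟨k, hk, rfl⟩ := List.getElem_of_mem hij
  have hk' : W.getD k (0,0) = W[k] := List.getD_eq_getElem _ _ hk
  have := warp_mono h (W.length - 1 - k) k (by omega)
  rw [hk'] at this
  have hlast := warp_getD_last h
  rw [show k + (W.length - 1 - k) = W.length - 1 by omega, hlast] at this
  exact this

section DTWLemmas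
variable {X : Type*} [MetricSpace X] [Inhabited X]

lemma warpCost_nonneg (p : ℝ) (σ τ : List X) (W : List (ℕ × ℕ)) : 0 ≤ warpCost p σ τ W := by
  apply List.sum_nonneg
  intro x hx
  simp only [List.mem_map] at hx
  obtain ⟨ij, -, rfl⟩ := hx
  exact Real.rpow_nonneg dist_nonneg p

lemma dtw_bddBelow (p : ℝ) (σ τ : List X) :
    BddBelow {c : ℝ | ∃ W, IsWarping σ.length τ.length W ∧ c = warpCost p σ τ W ^ (1 / p)} := by
  refine ⟨0, ?_⟩
  rintro c ⟨W, hW, rfl⟩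
  exact Real.rpow_nonneg (warpCost_nonneg p σ τ W) _

lemma dtw_le_warpCost (p : ℝ) (σ τ : List X) {W : List (ℕ × ℕ)}
    (hW : IsWarping σ.length τ.length W) :
    dtw p σ τ ≤ warpCost p σ τ W ^ (1 / p) :=
  csInf_le (dtw_bddBelow p σ τ) ⟨W, hW, rfl⟩

lemma dtw_snap (P : Finset X) (near : X → X)
    (hnearP : ∀ x, near x ∈ P) (hnearmin : ∀ x, ∀ q ∈ P, dist x (near x) ≤ dist x q)
    (c τ : List X) (hc : 1 ≤ c.length) (hτ : 1 ≤ τ.length)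
    (hτP : ∀ v ∈ τ, v ∈ P) :
    dtw 1 (c.map near) τ ≤ 2 * dtw 1 c τ := by
  have hlen : (c.map near).length = c.length := by simp
  have key : ∀ W : List (ℕ × ℕ), IsWarping c.length τ.length W →
      warpCost 1 (c.map near) τ W ≤ 2 * warpCost 1 c τ W := by
    intro W hW
    rw [warpCost, warpCost, ← List.sum_map_mul_left]
    apply List.sum_le_sum
    intro ij hij
    obtain ⟨hi, hj⟩ := warp_mem_bound hW ij hij
    have hi' : ij.1 < c.length := by omega
    have hj' : ij.2 < τ.length := by omega
    have hmap : (c.map near).getD ij.1 default = near (c.getD ij.1 default) := by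
      rw [List.getD_eq_getElem _ _ (by simpa using hi'), List.getElem_map,
        List.getD_eq_getElem _ _ hi']
    have htau : τ.getD ij.2 default ∈ P := by
      rw [List.getD_eq_getElem _ _ hj']
      exact hτP _ (List.getElem_mem hj')
    rw [hmap, Real.rpow_one, Real.rpow_one]
    set x := c.getD ij.1 default
    set t := τ.getD ij.2 default
    calc dist (near x) t ≤ dist (near x) x + dist x t := dist_triangle _ _ _
      _ ≤ dist x t + dist x t := by
          have h1 := hnearmin x t htau
          rw [dist_comm (near x) x]
          linarith
      _ = 2 * dist x t := by ring
  have hstd : IsWarping c.length τ.length (stdWarp c.length τ.length) :=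
    stdWarp_isWarping hc hτ
  have hhalf : dtw 1 (c.map near) τ / 2 ≤ dtw 1 c τ := by
    have hSne : {r : ℝ | ∃ W, IsWarping c.length τ.length W ∧
        r = warpCost 1 c τ W ^ ((1:ℝ) / 1)}.Nonempty :=
      ⟨warpCost 1 c τ (stdWarp c.length τ.length) ^ ((1:ℝ) / 1),
        ⟨stdWarp c.length τ.length, hstd, rfl⟩⟩
    rw [dtw]
    apply le_csInf hSne
    rintro b ⟨W, hW, rfl⟩
    rw [div_le_iff₀ (by norm_num : (0:ℝ) < 2)]
    have hW' : IsWarping (c.map near).length τ.length W := by rw [hlen]; exact hW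
    calc dtw 1 (c.map near) τ ≤ warpCost 1 (c.map near) τ W ^ (1 / (1:ℝ)) :=
          dtw_le_warpCost 1 _ τ hW'
      _ = warpCost 1 (c.map near) τ W := by norm_num
      _ ≤ 2 * warpCost 1 c τ W := key W hW
      _ = warpCost 1 c τ W ^ (1 / (1:ℝ)) * 2 := by rw [mul_comm]; norm_num
  linarith

end DTWLemmas

/-- **Discrete 2-approximation for the restricted 1-mean** (observation in Section
`section:constantfactor`): there is a point sequence `c'` of complexity at most `ℓ` whose
vertices are vertices of input sequences, with
`cost_1^1(T,c') ≤ 2 · min_{c ∈ X^{≤ℓ}} cost_1^1(T,c)`. -/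

theorem discrete_two_approx_restricted_one_mean {X : Type*} [MetricSpace X] [Inhabited X]
    (T : Finset (List X)) (hT : T.Nonempty) (n m : ℕ) (hn : T.card = n)
    (hm : ∀ τ ∈ T, 2 ≤ τ.length ∧ τ.length ≤ m)
    (ℓ : ℕ) (hℓ : 2 ≤ ℓ) :
    ∃ c' : List X, SeqLE ℓ c' ∧ (∀ v ∈ c', ∃ τ ∈ T, v ∈ τ) ∧
      ∀ c : List X, SeqLE ℓ c →
        dtwCost 1 1 T c' ≤ 2 * dtwCost 1 1 T c := by
  classical
  set P : Finset X := T.biUnion (fun τ => τ.toFinset) with hP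
  have hPmem : ∀ x : X, x ∈ P ↔ ∃ τ ∈ T, x ∈ τ := by
    intro x
    simp [hP, Finset.mem_biUnion, List.mem_toFinset]
  have hPne : P.Nonempty := by
    obtain ⟨τ₀, hτ₀⟩ := hT
    have h2 := (hm τ₀ hτ₀).1
    have : τ₀ ≠ [] := by intro h; rw [h] at h2; simp at h2
    obtain ⟨v, hv⟩ := List.exists_mem_of_ne_nil τ₀ this
    exact ⟨v, (hPmem v).2 ⟨τ₀, hτ₀, hv⟩⟩
  have hτP : ∀ τ ∈ T, ∀ v ∈ τ, v ∈ P := fun τ hτ v hv => (hPmem v).2 ⟨τ, hτ, hv⟩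
  -- nearest-point map
  have hex : ∀ x : X, ∃ q ∈ P, ∀ r ∈ P, dist x q ≤ dist x r := fun x =>
    P.exists_min_image (fun q => dist x q) hPne
  choose near hnearP hnearmin using hex
  -- the finite candidate set
  set C : Set (List X) := {l | 2 ≤ l.length ∧ l.length ≤ ℓ ∧ ∀ x ∈ l, x ∈ P} with hC
  have hCfin : C.Finite := by
    have himg : C ⊆ (fun l : List {x // x ∈ P} => l.map Subtype.val) ''
        {l : List {x // x ∈ P} | l.length ≤ ℓ} := by
      intro l hl
      refine ⟨l.pmap (fun a h => (⟨a, h⟩ : {x // x ∈ P})) hl.2.2, ?_, ?_⟩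
      · simp [hl.2.1]
      · simp only []
        rw [List.map_pmap]
        simp [List.pmap_eq_map]
    exact Set.Finite.subset ((List.finite_length_le _ ℓ).image _) himg
  have hCne : C.Nonempty := by
    obtain ⟨p₀, hp₀⟩ := hPne
    exact ⟨[p₀, p₀], by simp [hC], hℓ, by intro x hx; simp at hx; rw [hx]; exact hp₀⟩
  obtain ⟨c₀, hc₀C, hc₀min⟩ := Set.exists_min_image C (dtwCost 1 1 T) hCfin hCne
  refine ⟨c₀, ⟨hc₀C.1, hc₀C.2.1⟩, ?_, ?_⟩
  · intro v hv
    exact (hPmem v).1 (hc₀C.2.2 v hv)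
  · intro c hcseq
    set c'' : List X := c.map near with hc''
    have hc''C : c'' ∈ C := by
      have hlen'' : c''.length = c.length := by simp [hc'']
      refine ⟨by rw [hlen'']; exact hcseq.1, by rw [hlen'']; exact hcseq.2, ?_⟩
      intro x hx
      simp only [hc'', List.mem_map] at hx
      obtain ⟨y, -, rfl⟩ := hx
      exact hnearP y
    have hstep : dtwCost 1 1 T c'' ≤ 2 * dtwCost 1 1 T c := by
      rw [dtwCost, dtwCost, Finset.mul_sum]
      apply Finset.sum_le_sum
      intro τ hτ
      rw [Real.rpow_one, Real.rpow_one]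
      exact dtw_snap P near hnearP hnearmin c τ (by have := hcseq.1; omega)
        (by have := (hm τ hτ).1; omega) (hτP τ hτ)
    exact (hc₀min c'' hc''C).trans hstep
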